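/- Under (C0'), (C1') and (C2') the function J(u,v) = liminf over admissible sequences of (1/n) log G(u_n, v_n) is finite and Lipschitz continuous on cl(𝒞) × cl(𝒞): |J(û, v̂) − J(u, v)| ≤ κ |log δ| (|û − u| + |v̂ − v|) for all (u,v), (û,v̂) ∈ cl(𝒞) × cl(𝒞). -/

import Mathlib

open scoped ENNReal Classical BigOperators
open Filter

noncomputable section

namespace RW

variable {G : Type*}

/-- n-step transition kernel. -/
def kiter (p : G → G → ℝ≥0∞) : ℕ → G → G → ℝ≥0∞
  | 0 => fun x y => if x = y then 1 else 0
  | n + 1 => fun x y => ∑' z, p x z * kiter p n z y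

/-- Green function `G(x,y) = Σ_t ℙ_x(X(t)=y)`. -/
def green (p : G → G → ℝ≥0∞) (x y : G) : ℝ≥0∞ := ∑' n, kiter p n x y

end RW

namespace RW

/-- Euclidean norm on `Fin d → ℝ`. -/
def rnorm {d : ℕ} (x : Fin d → ℝ) : ℝ := Real.sqrt (∑ i, (x i) ^ 2)

/-- Embedding of the lattice `ℤ^d` into `ℝ^d`. -/
def toR {d : ℕ} (x : Fin d → ℤ) : Fin d → ℝ := fun i => (x i : ℝ)

/-- Jump generating function `R(α) = Σ_x μ(x) e^{⟨α,x⟩}`. -/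
def Rgen {d : ℕ} (μ : (Fin d → ℤ) → ℝ≥0∞) (α : Fin d → ℝ) : ℝ≥0∞ :=
  ∑' x : Fin d → ℤ, μ x * ENNReal.ofReal (Real.exp (∑ i, α i * (x i : ℝ)))

end RW

end

open RW

/-- The set of admissible values `liminf (1/n) log G(u_n, v_n)` over sequences
`u_n/n → u`, `v_n/n → v` in `E`. -/
def Jset {d : ℕ} (p : (Fin d → ℤ) → (Fin d → ℤ) → ℝ≥0∞)
    (E : Set (Fin d → ℤ)) (u v : Fin d → ℝ) : Set ℝ :=
  {r | ∃ un vn : ℕ → Fin d → ℤ, (∀ n, un n ∈ E) ∧ (∀ n, vn n ∈ E) ∧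
    Tendsto (fun n : ℕ => (n : ℝ)⁻¹ • toR (un n)) atTop (nhds u) ∧
    Tendsto (fun n : ℕ => (n : ℝ)⁻¹ • toR (vn n)) atTop (nhds v) ∧
    r = Filter.liminf (fun n => Real.log ((green p (un n) (vn n)).toReal) / n) atTop}

noncomputable def Jfun {d : ℕ} (p : (Fin d → ℤ) → (Fin d → ℤ) → ℝ≥0∞)
    (E : Set (Fin d → ℤ)) (u v : Fin d → ℝ) : ℝ :=
  sInf (Jset p E u v)

/-!
A path from `x` to `y` of `m ≤ κ |y - x|` steps, each of probability at least `δ`, gives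
`ℙ_x(X(m) = y) ≥ δ ^ m`; in particular `log G(x, y) ≥ -κ |log δ| |y - x|`, which makes `J` finite.
Splicing two such paths onto the ends of the walks counted by `G(x', y')` (Chapman–Kolmogorov)
yields `G(x, y) ≥ δ ^ (κ (|x' - x| + |y' - y|)) G(x', y')`, and transience makes every `G(x, y)`
finite, so `log G` is `κ |log δ|`-Lipschitz on `E × E`. Dividing by `n`, this passes to the `liminf`
along admissible sequences and then to the infimum `J`. Two distinct lattice points in the open cone
force a first step `z ∈ S`, so `δ ≤ μ z ≤ 1` and `δ.toReal` is not the junk value of `δ = ⊤`.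
-/

open Topology

section Liminf

variable {ι : Type*} {l : Filter ι}

theorem Real.le_liminf_of_nonpos {f : ι → ℝ} {b : ℝ} (hb : b ≤ 0)
    (h : ∀ᶠ i in l, b ≤ f i) : b ≤ liminf f l := by
  rw [liminf_eq]
  by_cases hA : BddAbove {a | ∀ᶠ i in l, a ≤ f i}
  · exact le_csSup hA h
  · rwa [Real.sSup_of_not_bddAbove hA]

/- `liminf` in `ℝ` is the `sSup` of the eventual lower bounds, which is the junk value `0` when
that set is empty or unbounded above; `|f - g|` small makes both sets junk or neither. -/
theorem Real.liminf_le_liminf_add {f g : ι → ℝ} {c : ℝ} (hc : 0 ≤ c)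
    (hfg : ∀ ε > 0, ∀ᶠ i in l, |f i - g i| ≤ c + ε) : liminf f l ≤ liminf g l + c := by
  rw [liminf_eq, liminf_eq]
  set A := {a | ∀ᶠ i in l, a ≤ f i}
  set B := {a | ∀ᶠ i in l, a ≤ g i}
  have shift : ∀ {F G : ι → ℝ}, (∀ ε > 0, ∀ᶠ i in l, |F i - G i| ≤ c + ε) → ∀ ε > 0,
      ∀ a ∈ {a | ∀ᶠ i in l, a ≤ F i}, a - (c + ε) ∈ {a | ∀ᶠ i in l, a ≤ G i} := by
    intro F G h ε hε a ha
    filter_upwards [ha, h ε hε] with i hai hi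
    linarith [(abs_le.1 hi).2]
  have hgf : ∀ ε > 0, ∀ᶠ i in l, |g i - f i| ≤ c + ε := by simpa only [abs_sub_comm] using hfg
  rcases Set.eq_empty_or_nonempty A with hA | hA
  · have hB : B = ∅ := Set.eq_empty_of_forall_notMem fun a ha =>
      (hA ▸ shift hgf 1 one_pos a ha : a - (c + 1) ∈ (∅ : Set ℝ))
    simpa [hA, hB] using hc
  by_cases hBbdd : BddAbove B
  · refine csSup_le hA fun a ha => le_of_forall_pos_le_add fun ε hε => ?_
    linarith [le_csSup hBbdd (shift hfg ε hε a ha)]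
  · have hAbdd : ¬ BddAbove A := fun ⟨M, hM⟩ =>
      hBbdd ⟨M + (c + 1), fun a ha => by linarith [hM (shift hgf 1 one_pos a ha)]⟩
    simpa [Real.sSup_of_not_bddAbove hAbdd, Real.sSup_of_not_bddAbove hBbdd] using hc

theorem Real.abs_liminf_sub_liminf_le [l.NeBot] {f g h : ι → ℝ} {c : ℝ}
    (hfg : ∀ᶠ i in l, |f i - g i| ≤ h i) (hh : Tendsto h l (𝓝 c)) :
    |liminf f l - liminf g l| ≤ c := by
  have hc : 0 ≤ c := ge_of_tendsto hh (hfg.mono fun i hi => (abs_nonneg _).trans hi)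
  have hfg' : ∀ ε > 0, ∀ᶠ i in l, |f i - g i| ≤ c + ε := fun ε hε => by
    filter_upwards [hfg, hh.eventually (gt_mem_nhds (lt_add_of_pos_right c hε))] with i h1 h2
    exact h1.trans h2.le
  have hgf : ∀ ε > 0, ∀ᶠ i in l, |g i - f i| ≤ c + ε := by simpa only [abs_sub_comm] using hfg'
  rw [abs_sub_le_iff]
  constructor
  · linarith [Real.liminf_le_liminf_add hc hfg']
  · linarith [Real.liminf_le_liminf_add hc hgf]

end Liminf

theorem Real.csInf_le_csInf_add {A B : Set ℝ} {c : ℝ} (hA : A.Nonempty) (hA' : BddBelow A)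
    (hB : B.Nonempty) (h : ∀ a ∈ A, ∀ b ∈ B, |a - b| ≤ c) : sInf A ≤ sInf B + c := by
  obtain ⟨a, ha⟩ := hA
  rw [← sub_le_iff_le_add]
  refine le_csInf hB fun b hb => ?_
  linarith [csInf_le hA' ha, (abs_le.1 (h a ha b hb)).2]

theorem Real.abs_csInf_sub_csInf_le {A B : Set ℝ} {c : ℝ} (hA : A.Nonempty) (hA' : BddBelow A)
    (hB : B.Nonempty) (hB' : BddBelow B) (h : ∀ a ∈ A, ∀ b ∈ B, |a - b| ≤ c) :
    |sInf A - sInf B| ≤ c := by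
  have h' : ∀ b ∈ B, ∀ a ∈ A, |b - a| ≤ c := fun b hb a ha => abs_sub_comm a b ▸ h a ha b hb
  rw [abs_sub_le_iff]
  constructor
  · linarith [Real.csInf_le_csInf_add hA hA' hB h]
  · linarith [Real.csInf_le_csInf_add hB hB' hA h']

theorem ENNReal.log_toReal_le_add_of_pow_mul_le {a b δ : ℝ≥0∞} {m : ℕ} {L : ℝ} (ha₀ : a ≠ 0)
    (ha : a ≠ ⊤) (hb : b ≠ ⊤) (hδ₀ : δ ≠ 0) (hδ : δ ≠ ⊤) (h : δ ^ m * a ≤ b) (hm : (m : ℝ) ≤ L) :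
    Real.log a.toReal ≤ Real.log b.toReal + L * |Real.log δ.toReal| := by
  have hδpos : 0 < δ.toReal := ENNReal.toReal_pos hδ₀ hδ
  have hapos : 0 < a.toReal := ENNReal.toReal_pos ha₀ ha
  have hlog : m * Real.log δ.toReal + Real.log a.toReal ≤ Real.log b.toReal := by
    have h' := ENNReal.toReal_mono hb h
    rw [ENNReal.toReal_mul, ENNReal.toReal_pow] at h'
    rw [← Real.log_pow, ← Real.log_mul (by positivity) hapos.ne']
    exact Real.log_le_log (by positivity) h'
  have hneg : -(m * Real.log δ.toReal) ≤ L * |Real.log δ.toReal| := by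
    rw [← mul_neg]
    exact (mul_le_mul_of_nonneg_left (neg_le_abs _) (Nat.cast_nonneg m)).trans
      (mul_le_mul_of_nonneg_right hm (abs_nonneg _))
  linarith

section Cone

open scoped Pointwise

variable {V : Type*} [NormedAddCommGroup V] [NormedSpace ℝ V] {C : Set V}

theorem smul_mem_closure_of_cone (hcone : ∀ t : ℝ, 0 < t → ∀ x ∈ C, t • x ∈ C) {x : V}
    (hx : x ∈ closure C) {t : ℝ} (ht : 0 ≤ t) : t • x ∈ closure C := by
  have hpos : ∀ s : ℝ, 0 < s → s • x ∈ closure C := fun s hs =>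
    closure_mono (Set.smul_set_subset_iff.2 fun y hy => hcone s hs y hy)
      (smul_closure_subset s C (Set.smul_mem_smul_set hx))
  rcases ht.eq_or_lt with rfl | ht
  · have hlim : Tendsto (fun s : ℝ => s • x) (𝓝[>] 0) (𝓝 ((0 : ℝ) • x)) :=
      ((continuous_id.smul continuous_const).tendsto 0).mono_left nhdsWithin_le_nhds
    exact isClosed_closure.mem_of_tendsto hlim (eventually_nhdsWithin_of_forall hpos)
  · exact hpos t ht

theorem add_mem_of_mem_closure_of_cone (hCo : IsOpen C) (hCc : Convex ℝ C)
    (hcone : ∀ t : ℝ, 0 < t → ∀ x ∈ C, t • x ∈ C) {x c : V} (hx : x ∈ closure C) (hc : c ∈ C) :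
    x + c ∈ C := by
  have hmid : (1 / 2 : ℝ) • x + (1 / 2 : ℝ) • c ∈ C := by
    rw [← hCo.interior_eq] at hc ⊢
    exact hCc.combo_closure_interior_mem_interior hx hc (by norm_num) (by norm_num) (by norm_num)
  simpa [← smul_add, smul_smul] using hcone 2 two_pos _ hmid

theorem exists_ball_subset_of_cone (hCo : IsOpen C) (hCne : C.Nonempty)
    (hcone : ∀ t : ℝ, 0 < t → ∀ x ∈ C, t • x ∈ C) {r : ℝ} (hr : 0 < r) :
    ∃ c, Metric.ball c r ⊆ C := by
  obtain ⟨w, hw⟩ := hCne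
  obtain ⟨ε, hε, hball⟩ := Metric.isOpen_iff.1 hCo w hw
  refine ⟨(r / ε) • w, ?_⟩
  have hscale : (r / ε) • Metric.ball w ε = Metric.ball ((r / ε) • w) r := by
    rw [smul_ball (by positivity), Real.norm_of_nonneg (by positivity), div_mul_cancel₀ _ hε.ne']
  rw [← hscale]
  rintro _ ⟨y, hy, rfl⟩
  exact hcone _ (by positivity) y (hball hy)

end Cone

namespace RW

section Kernel

variable {G : Type*} (p : G → G → ℝ≥0∞)

theorem kiter_mul_kiter_le (m n : ℕ) (x z y : G) :
    kiter p m x z * kiter p n z y ≤ kiter p (m + n) x y := by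
  induction m generalizing x with
  | zero => by_cases hxz : x = z <;> simp [kiter, hxz]
  | succ m ih =>
    rw [Nat.add_right_comm]
    simp only [kiter]
    rw [← ENNReal.tsum_mul_right]
    exact ENNReal.tsum_le_tsum fun w => (mul_assoc _ _ _).trans_le (mul_le_mul_right (ih w) _)

theorem pow_le_kiter_of_forall_le {δ : ℝ≥0∞} (m : ℕ) (f : ℕ → G)
    (hstep : ∀ j < m, δ ≤ p (f j) (f (j + 1))) : δ ^ m ≤ kiter p m (f 0) (f m) := by
  induction m generalizing f with
  | zero => simp [kiter]
  | succ m ih =>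
    calc δ ^ (m + 1) = δ * δ ^ m := pow_succ' δ m
      _ ≤ p (f 0) (f 1) * kiter p m (f 1) (f (m + 1)) :=
          mul_le_mul' (hstep 0 m.succ_pos)
            (ih (fun j => f (j + 1)) fun j hj => hstep (j + 1) (by omega))
      _ ≤ ∑' z, p (f 0) z * kiter p m z (f (m + 1)) := ENNReal.le_tsum (f 1)

theorem kiter_le_green (n : ℕ) (x y : G) : kiter p n x y ≤ green p x y :=
  ENNReal.le_tsum n

theorem kiter_mul_green_mul_kiter_le (m m' : ℕ) (x a b y : G) :
    kiter p m x a * green p a b * kiter p m' b y ≤ green p x y := by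
  calc kiter p m x a * green p a b * kiter p m' b y
      = ∑' n, kiter p m x a * kiter p n a b * kiter p m' b y := by
        rw [green, ← ENNReal.tsum_mul_left, ← ENNReal.tsum_mul_right]
    _ ≤ ∑' n, kiter p (m + n + m') x y := ENNReal.tsum_le_tsum fun n =>
        (mul_le_mul_left (kiter_mul_kiter_le p m n x a b) _).trans (kiter_mul_kiter_le p _ m' x b y)
    _ ≤ green p x y := ENNReal.tsum_comp_le_tsum_of_injective (fun i j h => by omega) _

end Kernel

section Communicates

variable {G : Type*}

/-- The bound `ℙ_x(X(m) = y) ≥ δ ^ m` for some `m ≤ κ D(x, y)` that (C0') provides on `E`. -/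
def Communicates (p : G → G → ℝ≥0∞) (E : Set G) (D : G → G → ℝ) (κ : ℝ) (δ : ℝ≥0∞) : Prop :=
  ∀ x ∈ E, ∀ y ∈ E, ∃ m : ℕ, (m : ℝ) ≤ κ * D x y ∧ δ ^ m ≤ kiter p m x y

variable {p : G → G → ℝ≥0∞} {E : Set G} {D : G → G → ℝ} {κ : ℝ} {δ : ℝ≥0∞}

theorem Communicates.green_ne_zero (h : Communicates p E D κ δ) (hδ₀ : δ ≠ 0) {x y : G}
    (hx : x ∈ E) (hy : y ∈ E) : green p x y ≠ 0 := by
  obtain ⟨m, -, hm⟩ := h x hx y hy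
  intro h0
  exact pow_ne_zero m hδ₀ (le_zero_iff.1 (h0 ▸ hm.trans (kiter_le_green p m x y)))

theorem Communicates.green_ne_top (h : Communicates p E D κ δ) (hδ₀ : δ ≠ 0)
    (htrans : ∀ x ∈ E, green p x x < ⊤) {x y : G} (hx : x ∈ E) (hy : y ∈ E) :
    green p x y ≠ ⊤ := by
  obtain ⟨m, -, hm⟩ := h y hy x hx
  have hchain : green p x y * δ ^ m ≤ green p x x := by
    simpa [kiter] using
      (mul_le_mul_right hm _).trans (kiter_mul_green_mul_kiter_le p 0 m x x y x)
  intro htop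
  rw [htop, ENNReal.top_mul (pow_ne_zero m hδ₀), top_le_iff] at hchain
  exact (htrans x hx).ne hchain

theorem Communicates.log_green_le (h : Communicates p E D κ δ) (hδ₀ : δ ≠ 0) (hδ : δ ≠ ⊤)
    (hfin : ∀ x ∈ E, ∀ y ∈ E, green p x y ≠ ⊤) {x y x' y' : G}
    (hx : x ∈ E) (hy : y ∈ E) (hx' : x' ∈ E) (hy' : y' ∈ E) :
    Real.log (green p x' y').toReal
      ≤ Real.log (green p x y).toReal + κ * |Real.log δ.toReal| * (D x x' + D y' y) := by
  obtain ⟨m₁, hm₁, hk₁⟩ := h x hx x' hx'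
  obtain ⟨m₂, hm₂, hk₂⟩ := h y' hy' y hy
  have hchain : δ ^ (m₁ + m₂) * green p x' y' ≤ green p x y :=
    calc δ ^ (m₁ + m₂) * green p x' y' = δ ^ m₁ * green p x' y' * δ ^ m₂ := by ring
      _ ≤ kiter p m₁ x x' * green p x' y' * kiter p m₂ y' y := by gcongr
      _ ≤ green p x y := kiter_mul_green_mul_kiter_le p m₁ m₂ x x' y' y
  have hm : ((m₁ + m₂ : ℕ) : ℝ) ≤ κ * (D x x' + D y' y) := by push_cast; linarith
  have := ENNReal.log_toReal_le_add_of_pow_mul_le (h.green_ne_zero hδ₀ hx' hy')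
    (hfin x' hx' y' hy') (hfin x hx y hy) hδ₀ hδ hchain hm
  linarith

theorem Communicates.neg_le_log_green (h : Communicates p E D κ δ) (hδ₀ : δ ≠ 0) (hδ : δ ≠ ⊤)
    {x y : G} (hx : x ∈ E) (hy : y ∈ E) (hxy : green p x y ≠ ⊤) :
    -(κ * |Real.log δ.toReal| * D x y) ≤ Real.log (green p x y).toReal := by
  obtain ⟨m, hm, hk⟩ := h x hx y hy
  have := ENNReal.log_toReal_le_add_of_pow_mul_le one_ne_zero ENNReal.one_ne_top hxy hδ₀ hδ
    (by simpa using hk.trans (kiter_le_green p m x y)) hm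
  simp only [ENNReal.toReal_one, Real.log_one] at this
  linarith

end Communicates

section Lattice

variable {d : ℕ}

theorem rnorm_eq_norm (x : Fin d → ℝ) : rnorm x = ‖WithLp.toLp 2 x‖ := by
  simp [rnorm, EuclideanSpace.norm_eq]

theorem rnorm_nonneg (x : Fin d → ℝ) : 0 ≤ rnorm x := Real.sqrt_nonneg _

theorem continuous_rnorm : Continuous (rnorm (d := d)) := by
  simp_rw [funext rnorm_eq_norm]
  exact continuous_norm.comp (PiLp.continuous_toLp 2 _)

theorem toR_sub (x y : Fin d → ℤ) : toR (x - y) = toR x - toR y := by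
  funext i; simp [toR]

theorem rnorm_toR_sub_comm (x y : Fin d → ℤ) : rnorm (toR (x - y)) = rnorm (toR (y - x)) := by
  simp only [rnorm_eq_norm, toR_sub, WithLp.toLp_sub, norm_sub_rev]

theorem rnorm_inv_smul_toR_sub (n : ℕ) (x y : Fin d → ℤ) :
    rnorm ((n : ℝ)⁻¹ • toR y - (n : ℝ)⁻¹ • toR x) = rnorm (toR (y - x)) / n := by
  rw [rnorm_eq_norm, rnorm_eq_norm, toR_sub, ← smul_sub, WithLp.toLp_smul, norm_smul,
    norm_inv, RCLike.norm_natCast, inv_mul_eq_div]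

theorem dist_toR_round_le (y : Fin d → ℝ) : dist (toR fun i => round (y i)) y ≤ 1 / 2 := by
  refine (dist_pi_le_iff (by norm_num)).2 fun i => ?_
  rw [Real.dist_eq, abs_sub_comm]
  exact abs_sub_round (y i)

variable {C : Set (Fin d → ℝ)}

theorem exists_toR_mem_tendsto (hCo : IsOpen C) (hCc : Convex ℝ C) (hCne : C.Nonempty)
    (hcone : ∀ t : ℝ, 0 < t → ∀ x ∈ C, t • x ∈ C) {u : Fin d → ℝ} (hu : u ∈ closure C) :
    ∃ a : ℕ → Fin d → ℤ, (∀ n, toR (a n) ∈ C) ∧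
      Tendsto (fun n : ℕ => (n : ℝ)⁻¹ • toR (a n)) atTop (𝓝 u) := by
  obtain ⟨c, hc⟩ := exists_ball_subset_of_cone hCo hCne hcone one_pos
  set a : ℕ → Fin d → ℤ := fun n i => round (((n : ℝ) • u + c) i)
  have herr : ∀ n : ℕ, toR (a n) - (n : ℝ) • u ∈ Metric.ball c 1 := fun n => by
    rw [Metric.mem_ball, dist_eq_norm, sub_sub, ← dist_eq_norm]
    exact (dist_toR_round_le _).trans_lt (by norm_num)
  refine ⟨a, fun n => ?_, ?_⟩
  · simpa using add_mem_of_mem_closure_of_cone hCo hCc hcone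
      (smul_mem_closure_of_cone hcone hu n.cast_nonneg) (hc (herr n))
  · have hbdd : IsBoundedUnder (· ≤ ·) atTop (norm ∘ fun n : ℕ => toR (a n) - (n : ℝ) • u) :=
      isBoundedUnder_of ⟨‖c‖ + 1, fun n => by
        simp only [Function.comp_apply]
        have := mem_ball_iff_norm.1 (herr n)
        linarith [norm_le_norm_add_norm_sub' (toR (a n) - (n : ℝ) • u) c]⟩
    have hlim := (tendsto_inv_atTop_nhds_zero_nat (𝕜 := ℝ)).zero_smul_isBoundedUnder_le hbdd
    refine (zero_add u ▸ hlim.add_const u).congr' ?_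
    filter_upwards [eventually_ne_atTop 0] with n hn
    rw [smul_sub, smul_smul, inv_mul_cancel₀ (Nat.cast_ne_zero.2 hn), one_smul, sub_add_cancel]

theorem exists_ne_toR_mem (hd : d ≠ 0) (hCo : IsOpen C) (hCne : C.Nonempty)
    (hcone : ∀ t : ℝ, 0 < t → ∀ x ∈ C, t • x ∈ C) :
    ∃ z₀ z₁ : Fin d → ℤ, z₀ ≠ z₁ ∧ toR z₀ ∈ C ∧ toR z₁ ∈ C := by
  obtain ⟨c, hc⟩ := exists_ball_subset_of_cone hCo hCne hcone two_pos
  set z₀ : Fin d → ℤ := fun i => round (c i)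
  set e : Fin d → ℤ := Pi.single ⟨0, Nat.pos_of_ne_zero hd⟩ 1
  have hz₀ : dist (toR z₀) c ≤ 1 / 2 := dist_toR_round_le c
  have he : ‖toR e‖ = 1 := by
    have : toR e = Pi.single ⟨0, Nat.pos_of_ne_zero hd⟩ (1 : ℝ) := by
      funext i; simp [toR, e, Pi.single_apply, apply_ite]
    rw [this, Pi.norm_single, norm_one]
  refine ⟨z₀, z₀ + e, ?_, hc ?_, hc ?_⟩
  · simp [e]
  · rw [Metric.mem_ball]; linarith
  · have h1 : dist (toR (z₀ + e)) (toR z₀) = 1 := by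
      rw [dist_eq_norm, ← toR_sub, add_sub_cancel_left, he]
    rw [Metric.mem_ball]
    linarith [dist_triangle (toR (z₀ + e)) (toR z₀) c]

end Lattice

theorem communicates_of_path {G : Type*} [AddGroup G] {p : G → G → ℝ≥0∞} {E S : Set G}
    {D : G → G → ℝ} {κ : ℝ} {δ : ℝ≥0∞} (hD : ∀ x, 0 ≤ κ * D x x)
    (hstep : ∀ x ∈ E, ∀ y ∈ E, y - x ∈ S → δ ≤ p x y)
    (hpath : ∀ x ∈ E, ∀ y ∈ E, x ≠ y → ∃ (m : ℕ) (f : ℕ → G),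
      f 0 = x ∧ f m = y ∧ (m : ℝ) ≤ κ * D x y ∧ (∀ j ≤ m, f j ∈ E) ∧ ∀ j < m, f (j + 1) - f j ∈ S) :
    Communicates p E D κ δ := by
  intro x hx y hy
  rcases eq_or_ne x y with rfl | hxy
  · exact ⟨0, by simpa using hD x, by simp [kiter]⟩
  obtain ⟨m, f, rfl, rfl, hm, hfE, hfS⟩ := hpath x hx y hy hxy
  exact ⟨m, hm, pow_le_kiter_of_forall_le p m f fun j hj =>
    hstep _ (hfE j hj.le) _ (hfE (j + 1) hj) (hfS j hj)⟩

section Walk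

variable {d : ℕ} {p : (Fin d → ℤ) → (Fin d → ℤ) → ℝ≥0∞} {E : Set (Fin d → ℤ)} {κ : ℝ}
  {δ : ℝ≥0∞}

theorem Communicates.abs_log_green_sub_le
    (h : Communicates p E (fun x y => rnorm (toR (y - x))) κ δ) (hδ₀ : δ ≠ 0) (hδ : δ ≠ ⊤)
    (hfin : ∀ x ∈ E, ∀ y ∈ E, green p x y ≠ ⊤) {x y a b : Fin d → ℤ}
    (hx : x ∈ E) (hy : y ∈ E) (ha : a ∈ E) (hb : b ∈ E) :
    |Real.log (green p a b).toReal - Real.log (green p x y).toReal|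
      ≤ κ * |Real.log δ.toReal| * (rnorm (toR (a - x)) + rnorm (toR (b - y))) := by
  have h₁ := h.log_green_le hδ₀ hδ hfin hx hy ha hb
  have h₂ := h.log_green_le hδ₀ hδ hfin ha hb hx hy
  simp only [rnorm_toR_sub_comm y b, rnorm_toR_sub_comm x a] at h₁ h₂
  exact abs_sub_le_iff.2 ⟨by linarith, by linarith⟩

theorem Jset_nonempty {C : Set (Fin d → ℝ)} (hCo : IsOpen C) (hCc : Convex ℝ C)
    (hCne : C.Nonempty) (hcone : ∀ t : ℝ, 0 < t → ∀ x ∈ C, t • x ∈ C)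
    (hCE : ∀ z, toR z ∈ C → z ∈ E) {u v : Fin d → ℝ} (hu : u ∈ closure C) (hv : v ∈ closure C) :
    (Jset p E u v).Nonempty := by
  obtain ⟨a, haC, ha⟩ := exists_toR_mem_tendsto hCo hCc hCne hcone hu
  obtain ⟨b, hbC, hb⟩ := exists_toR_mem_tendsto hCo hCc hCne hcone hv
  exact ⟨_, a, b, fun n => hCE _ (haC n), fun n => hCE _ (hbC n), ha, hb, rfl⟩

theorem Communicates.bddBelow_Jset (h : Communicates p E (fun x y => rnorm (toR (y - x))) κ δ)
    (hκ : 0 ≤ κ) (hδ₀ : δ ≠ 0) (hδ : δ ≠ ⊤) (hfin : ∀ x ∈ E, ∀ y ∈ E, green p x y ≠ ⊤)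
    (u v : Fin d → ℝ) : BddBelow (Jset p E u v) := by
  set K := κ * |Real.log δ.toReal|
  have hK : 0 ≤ K := by positivity
  refine ⟨-(K * (rnorm (v - u) + 1)), ?_⟩
  rintro r ⟨x, y, hxE, hyE, hx, hy, rfl⟩
  refine Real.le_liminf_of_nonpos (by have := rnorm_nonneg (v - u); nlinarith) ?_
  have hdist : Tendsto (fun n : ℕ => rnorm ((n : ℝ)⁻¹ • toR (y n) - (n : ℝ)⁻¹ • toR (x n)))
      atTop (𝓝 (rnorm (v - u))) := (continuous_rnorm.tendsto _).comp (hy.sub hx)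
  filter_upwards [hdist.eventually (gt_mem_nhds (lt_add_one _))] with n hn
  rw [rnorm_inv_smul_toR_sub] at hn
  calc -(K * (rnorm (v - u) + 1)) ≤ -(K * (rnorm (toR (y n - x n)) / n)) :=
        neg_le_neg (mul_le_mul_of_nonneg_left hn.le hK)
    _ = -(K * rnorm (toR (y n - x n))) / n := by ring
    _ ≤ Real.log (green p (x n) (y n)).toReal / n :=
        div_le_div_of_nonneg_right (h.neg_le_log_green hδ₀ hδ (hxE n) (hyE n)
          (hfin _ (hxE n) _ (hyE n))) n.cast_nonneg

theorem Communicates.abs_sub_le_of_mem_Jset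
    (h : Communicates p E (fun x y => rnorm (toR (y - x))) κ δ) (hδ₀ : δ ≠ 0) (hδ : δ ≠ ⊤)
    (hfin : ∀ x ∈ E, ∀ y ∈ E, green p x y ≠ ⊤) {u v u' v' : Fin d → ℝ} {r r' : ℝ}
    (hr' : r' ∈ Jset p E u' v') (hr : r ∈ Jset p E u v) :
    |r' - r| ≤ κ * |Real.log δ.toReal| * (rnorm (u' - u) + rnorm (v' - v)) := by
  obtain ⟨a, b, haE, hbE, ha, hb, rfl⟩ := hr'
  obtain ⟨x, y, hxE, hyE, hx, hy, rfl⟩ := hr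
  set K := κ * |Real.log δ.toReal|
  refine Real.abs_liminf_sub_liminf_le (h := fun n : ℕ => K *
    (rnorm ((n : ℝ)⁻¹ • toR (a n) - (n : ℝ)⁻¹ • toR (x n))
      + rnorm ((n : ℝ)⁻¹ • toR (b n) - (n : ℝ)⁻¹ • toR (y n)))) (Eventually.of_forall fun n => ?_)
    (((continuous_rnorm.tendsto _).comp (ha.sub hx)).add
      ((continuous_rnorm.tendsto _).comp (hb.sub hy)) |>.const_mul K)
  rw [rnorm_inv_smul_toR_sub, rnorm_inv_smul_toR_sub, ← sub_div, abs_div, Nat.abs_cast]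
  calc _ ≤ K * (rnorm (toR (a n - x n)) + rnorm (toR (b n - y n))) / n :=
        div_le_div_of_nonneg_right (h.abs_log_green_sub_le hδ₀ hδ hfin (hxE n) (hyE n) (haE n)
          (hbE n)) n.cast_nonneg
    _ = _ := by ring

end Walk

end RW

theorem statement19_general {d : ℕ}
    (μ : (Fin d → ℤ) → ℝ≥0∞) (hμ : (∑' z, μ z) = 1)
    (C : Set (Fin d → ℝ)) (hCopen : IsOpen C) (hCconv : Convex ℝ C) (hCne : C.Nonempty)
    (hcone : ∀ t : ℝ, 0 < t → ∀ x ∈ C, t • x ∈ C)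
    (E : Set (Fin d → ℤ)) (hE : E = {x | toR x ∈ closure C})
    (p : (Fin d → ℤ) → (Fin d → ℤ) → ℝ≥0∞)
    (hp : p = fun x y => if x ∈ E ∧ y ∈ E then μ (y - x) else 0)
    -- (C0')
    (htrans : ∀ x ∈ E, green p x x < ⊤)
    (κ : ℝ) (hκ : 0 < κ)
    (S : Set (Fin d → ℤ))
    (hcomm : ∀ x ∈ E, ∀ y ∈ E, x ≠ y → ∃ (m : ℕ) (f : ℕ → Fin d → ℤ),
      f 0 = x ∧ f m = y ∧ (m : ℝ) ≤ κ * rnorm (toR (y - x)) ∧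
      (∀ j ≤ m, f j ∈ E) ∧ ∀ j < m, f (j + 1) - f j ∈ S)
    -- (C2')
    (hmean : (fun i => ∑' x : Fin d → ℤ, (μ x).toReal * (x i : ℝ)) ≠ (0 : Fin d → ℝ))
    (δ : ℝ≥0∞) (hδpos : 0 < δ) (hδ : ∀ z ∈ S, δ ≤ μ z) :
    (∀ u ∈ closure C, ∀ v ∈ closure C,
      (Jset p E u v).Nonempty ∧ BddBelow (Jset p E u v)) ∧
    ∀ u ∈ closure C, ∀ v ∈ closure C, ∀ u' ∈ closure C, ∀ v' ∈ closure C,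
      |Jfun p E u' v' - Jfun p E u v| ≤
        κ * |Real.log δ.toReal| * (rnorm (u' - u) + rnorm (v' - v)) := by
  have hd : d ≠ 0 := by
    rintro rfl
    exact hmean (Subsingleton.elim _ _)
  have hCE : ∀ z, toR z ∈ C → z ∈ E := fun z hz => hE ▸ subset_closure hz
  have hδtop : δ ≠ ⊤ := by
    obtain ⟨z₀, z₁, hne, h₀, h₁⟩ := exists_ne_toR_mem hd hCopen hCne hcone
    obtain ⟨m, f, rfl, rfl, -, -, hfS⟩ := hcomm _ (hCE _ h₀) _ (hCE _ h₁) hne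
    have hm : 0 < m := Nat.pos_of_ne_zero fun hm => hne (by rw [hm])
    refine ne_top_of_le_ne_top ?_ ((hδ _ (hfS 0 hm)).trans (ENNReal.le_tsum _))
    exact hμ ▸ ENNReal.one_ne_top
  have hreach : Communicates p E (fun x y => rnorm (toR (y - x))) κ δ :=
    communicates_of_path (fun x => by simp [toR, rnorm])
      (fun x hx y hy hS => by simp [hp, hx, hy, hδ _ hS]) hcomm
  have hfin : ∀ x ∈ E, ∀ y ∈ E, green p x y ≠ ⊤ := fun x hx y hy =>
    hreach.green_ne_top hδpos.ne' htrans hx hy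
  have hJ : ∀ u ∈ closure C, ∀ v ∈ closure C,
      (Jset p E u v).Nonempty ∧ BddBelow (Jset p E u v) := fun u hu v hv =>
    ⟨Jset_nonempty hCopen hCconv hCne hcone hCE hu hv,
      hreach.bddBelow_Jset hκ.le hδpos.ne' hδtop hfin u v⟩
  refine ⟨hJ, fun u hu v hv u' hu' v' hv' => ?_⟩
  exact Real.abs_csInf_sub_csInf_le (hJ u' hu' v' hv').1 (hJ u' hu' v' hv').2 (hJ u hu v hv).1
    (hJ u hu v hv).2 fun r' hr' r hr => hreach.abs_sub_le_of_mem_Jset hδpos.ne' hδtop hfin hr' hr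

theorem statement19 {d : ℕ}
    (μ : (Fin d → ℤ) → ℝ≥0∞) (hμ : (∑' z, μ z) = 1)
    (C : Set (Fin d → ℝ)) (hCopen : IsOpen C) (hCconv : Convex ℝ C) (hCne : C.Nonempty)
    (hcone : ∀ t : ℝ, 0 < t → ∀ x ∈ C, t • x ∈ C)
    (E : Set (Fin d → ℤ)) (hE : E = {x | toR x ∈ closure C})
    (p : (Fin d → ℤ) → (Fin d → ℤ) → ℝ≥0∞)
    (hp : p = fun x y => if x ∈ E ∧ y ∈ E then μ (y - x) else 0)
    -- (C0')
    (htrans : ∀ x ∈ E, green p x x < ⊤)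
    (κ : ℝ) (hκ : 0 < κ)
    (S : Set (Fin d → ℤ)) (hSfin : S.Finite) (hSsupp : ∀ z ∈ S, μ z ≠ 0)
    (hcomm : ∀ x ∈ E, ∀ y ∈ E, x ≠ y → ∃ (m : ℕ) (f : ℕ → Fin d → ℤ),
      f 0 = x ∧ f m = y ∧ (m : ℝ) ≤ κ * rnorm (toR (y - x)) ∧
      (∀ j ≤ m, f j ∈ E) ∧ ∀ j < m, f (j + 1) - f j ∈ S)
    -- (C2')
    (hRfin : ∃ U : Set (Fin d → ℝ), IsOpen U ∧ {α | Rgen μ α ≤ 1} ⊆ U ∧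
      ∀ α ∈ U, Rgen μ α < ⊤)
    (hmean : (fun i => ∑' x : Fin d → ℤ, (μ x).toReal * (x i : ℝ)) ≠ (0 : Fin d → ℝ))
    (δ : ℝ≥0∞) (hδpos : 0 < δ) (hδ : ∀ z ∈ S, δ ≤ μ z) :
    (∀ u ∈ closure C, ∀ v ∈ closure C,
      (Jset p E u v).Nonempty ∧ BddBelow (Jset p E u v)) ∧
    ∀ u ∈ closure C, ∀ v ∈ closure C, ∀ u' ∈ closure C, ∀ v' ∈ closure C,
      |Jfun p E u' v' - Jfun p E u v| ≤
        κ * |Real.log δ.toReal| * (rnorm (u' - u) + rnorm (v' - v)) :=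
  statement19_general μ hμ C hCopen hCconv hCne hcone E hE p hp htrans κ hκ S hcomm hmean δ hδpos hδ
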